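/- In the two-resource proportional fairness problem, if (θ, γ) is optimal and user u has θ_u = 0 < γ_u while user v has γ_v = 0 < θ_v, then R_{u,1}/R_{u,2} ≤ R_{v,1}/R_{v,2}. -/

import Mathlib

/-!
Exchange argument. Give user `u` the amount `ε R₂(v)` of resource 1 taken from `v`, and give `v`
the amount `ε R₁(v)` of resource 2 taken from `u`. The rate of `v` is unchanged, every other rate
is untouched, and the rate of `u` grows by `ε (R₁(u) R₂(v) - R₂(u) R₁(v))`, which is positive when
`R₁(u)/R₂(u) > R₁(v)/R₂(v)`. For small `ε > 0` the new allocation is feasible, contradicting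
optimality.
-/

open Finset

section Transfer

variable {ι : Type*} [DecidableEq ι]

def transfer (u v : ι) (a : ℝ) : ι → ℝ := Pi.single u a - Pi.single v a

variable {u v : ι} {a : ℝ}

lemma sum_add_transfer [Fintype ι] (f : ι → ℝ) : ∑ w, (f + transfer u v a) w = ∑ w, f w := by
  simp [transfer, sum_add_distrib]

lemma add_transfer_nonneg {f : ι → ℝ} (hf : ∀ w, 0 ≤ f w) (ha : 0 ≤ a) (hav : a ≤ f v) (w : ι) :
    0 ≤ (f + transfer u v a) w := by
  have hu : 0 ≤ (Pi.single u a : ι → ℝ) w := by by_cases hw : w = u <;> simp [hw, ha]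
  have hv : (Pi.single v a : ι → ℝ) w ≤ f w := by
    by_cases hw : w = v
    · subst hw; simpa using hav
    · simpa [hw] using hf w
  simp only [transfer, Pi.add_apply, Pi.sub_apply]
  linarith

lemma rate_add_transfer_add_transfer (R1 R2 θ γ : ι → ℝ) (huv : u ≠ v)
    (hθu : θ u = 0) (hγv : γ v = 0) (ε : ℝ) (w : ι) :
    R1 w * (θ + transfer u v (ε * R2 v)) w + R2 w * (γ + transfer v u (ε * R1 v)) w =
      R1 w * θ w + R2 w * γ w + if w = u then ε * (R1 u * R2 v - R2 u * R1 v) else 0 := by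
  by_cases hwu : w = u
  · subst hwu
    simp only [transfer, Pi.add_apply, Pi.sub_apply, Pi.single_eq_same, Pi.single_eq_of_ne huv,
      hθu, ↓reduceIte]
    ring
  by_cases hwv : w = v
  · subst hwv
    simp only [transfer, Pi.add_apply, Pi.sub_apply, Pi.single_eq_same, Pi.single_eq_of_ne hwu,
      hγv, hwu, ↓reduceIte]
    ring
  · simp [transfer, hwu, hwv]

end Transfer

lemma sum_log_lt_sum_log {ι : Type*} [Fintype ι] {f g : ι → ℝ} (hf : ∀ w, 0 < f w)
    (hle : ∀ w, f w ≤ g w) {u : ι} (hlt : f u < g u) :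
    ∑ w, Real.log (f w) < ∑ w, Real.log (g w) :=
  sum_lt_sum (fun w _ => Real.log_le_log (hf w) (hle w))
    ⟨u, mem_univ u, Real.log_lt_log (hf u) hlt⟩

theorem ratio_ordering_at_optimum {ι : Type*} [Fintype ι]
    (R1 R2 : ι → ℝ) (hR1 : ∀ u, 0 < R1 u) (hR2 : ∀ u, 0 < R2 u)
    (θ γ : ι → ℝ)
    (hθ : ∀ u, 0 ≤ θ u) (hγ : ∀ u, 0 ≤ γ u)
    (hθs : (∑ u, θ u) ≤ 1) (hγs : (∑ u, γ u) ≤ 1)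
    (hpos : ∀ u, 0 < R1 u * θ u + R2 u * γ u)
    (hopt : ∀ θ' γ' : ι → ℝ, (∀ u, 0 ≤ θ' u) → (∀ u, 0 ≤ γ' u) →
      (∑ u, θ' u) ≤ 1 → (∑ u, γ' u) ≤ 1 →
      (∀ u, 0 < R1 u * θ' u + R2 u * γ' u) →
      (∑ u, Real.log (R1 u * θ' u + R2 u * γ' u)) ≤
        ∑ u, Real.log (R1 u * θ u + R2 u * γ u))
    (u v : ι) (huθ : θ u = 0) (huγ : 0 < γ u) (hvγ : γ v = 0) (hvθ : 0 < θ v) :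
    R1 u / R2 u ≤ R1 v / R2 v := by
  classical
  by_contra! hratio
  have huv : u ≠ v := by rintro rfl; linarith
  set ε := min (θ v / R2 v) (γ u / R1 v)
  have hε : 0 < ε := lt_min (div_pos hvθ (hR2 v)) (div_pos huγ (hR1 v))
  have hεθ : ε * R2 v ≤ θ v := (le_div_iff₀ (hR2 v)).mp (min_le_left _ _)
  have hεγ : ε * R1 v ≤ γ u := (le_div_iff₀ (hR1 v)).mp (min_le_right _ _)
  have hgain : 0 < ε * (R1 u * R2 v - R2 u * R1 v) := by
    rw [div_lt_div_iff₀ (hR2 v) (hR2 u)] at hratio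
    exact mul_pos hε (by linarith)
  have hrate := rate_add_transfer_add_transfer R1 R2 θ γ huv huθ hvγ ε
  have hle : ∀ w, R1 w * θ w + R2 w * γ w ≤
      R1 w * (θ + transfer u v (ε * R2 v)) w + R2 w * (γ + transfer v u (ε * R1 v)) w := by
    intro w
    rw [hrate w]
    split_ifs <;> linarith
  have hlt := sum_log_lt_sum_log hpos hle (u := u) (by rw [hrate u, if_pos rfl]; linarith)
  refine hlt.not_ge (hopt _ _ (add_transfer_nonneg hθ (mul_pos hε (hR2 v)).le hεθ)
    (add_transfer_nonneg hγ (mul_pos hε (hR1 v)).le hεγ) ?_ ?_ fun w => (hpos w).trans_le (hle w))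
  · rwa [sum_add_transfer]
  · rwa [sum_add_transfer]
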